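/- Let A be the 2m×2m real Jordan block with rotation blocks Q = [[cos θ, sin θ], [−sin θ, cos θ]] and superdiagonal I₂ blocks, and define v(θ) = cos θ · A^{2m−1}(1,·) + sin θ · A^{2m−1}(2,·) + A^{2m−1}(3,·) ∈ ℝ^{2m} (row vector; for m = 1 the third-row term is omitted). Then for j = 1, …, m, v_{2j−1}(θ) = C(2m, j−1)·cos((2m − j + 1)θ) and v_{2j}(θ) = C(2m, j−1)·sin((2m − j + 1)θ). -/

import Mathlib

/-!
Indexing `Fin (2m)` by `Fin m × Fin 2` (block, position in block), `A = jordanOsc m θ` becomes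
`J ⊗ I₂ + I_m ⊗ Q(θ)`, where `J` is the nilpotent shift. The two summands commute, so the
binomial theorem gives `A ^ k = ∑ C(k, d) J ^ d ⊗ Q(θ) ^ (k - d)`: the `d`-th block superdiagonal
of `A ^ k` is `C(k, d) Q((k - d) θ)`. Since the first row of `A` is `(cos θ, sin θ, 1, 0, …)`,
the vector `v` is the first row of `A ^ (2m)`, whose blocks are `C(2m, d) (cos, sin)((2m - d) θ)`.
-/

/-- The `2m × 2m` real Jordan form with `m` identical rotation blocks
`Q = [[cos θ, sin θ], [−sin θ, cos θ]]` on the diagonal and `I₂` blocks on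
the superdiagonal (0-indexed). -/
noncomputable def jordanOsc (m : ℕ) (θ : ℝ) : Matrix (Fin (2 * m)) (Fin (2 * m)) ℝ :=
  Matrix.of fun i j =>
    if (i : ℕ) / 2 = (j : ℕ) / 2 then
      (if (i : ℕ) % 2 = (j : ℕ) % 2 then Real.cos θ
       else if (i : ℕ) % 2 = 0 then Real.sin θ else -Real.sin θ)
    else if (j : ℕ) / 2 = (i : ℕ) / 2 + 1 ∧ (i : ℕ) % 2 = (j : ℕ) % 2 then 1 else 0

section

open Matrix Real Kronecker

theorem Matrix.kronecker_pow {ι κ R : Type*} [Fintype ι] [Fintype κ] [DecidableEq ι]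
    [DecidableEq κ] [CommSemiring R] (A : Matrix ι ι R) (B : Matrix κ κ R) (n : ℕ) :
    (A ⊗ₖ B) ^ n = (A ^ n) ⊗ₖ (B ^ n) := by
  induction n with
  | zero => simp
  | succ n ih => rw [pow_succ, ih, ← mul_kronecker_mul, ← pow_succ, ← pow_succ]

theorem Matrix.submatrix_pow_equiv {ι κ R : Type*} [Fintype ι] [Fintype κ] [DecidableEq ι]
    [DecidableEq κ] [CommSemiring R] (A : Matrix ι ι R) (e : κ ≃ ι) (n : ℕ) :
    (A ^ n).submatrix e e = A.submatrix e e ^ n :=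
  map_pow (reindexAlgEquiv R R e.symm) A n

noncomputable def rotationMatrix (θ : ℝ) : Matrix (Fin 2) (Fin 2) ℝ :=
  !![cos θ, sin θ; -sin θ, cos θ]

theorem rotationMatrix_mul (x y : ℝ) :
    rotationMatrix x * rotationMatrix y = rotationMatrix (x + y) := by
  ext i j
  fin_cases i <;> fin_cases j <;>
    simp [rotationMatrix, mul_apply, Fin.sum_univ_two, cos_add, sin_add] <;> ring

theorem rotationMatrix_pow (θ : ℝ) (n : ℕ) : rotationMatrix θ ^ n = rotationMatrix (n * θ) := by
  induction n with
  | zero => ext i j; fin_cases i <;> fin_cases j <;> simp [rotationMatrix]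
  | succ n ih => rw [pow_succ, ih, rotationMatrix_mul]; push_cast; ring_nf

def jordanShift (R : Type*) [Zero R] [One R] (m : ℕ) : Matrix (Fin m) (Fin m) R :=
  Matrix.of fun b c => if (c : ℕ) = b + 1 then 1 else 0

theorem jordanShift_pow_apply {R : Type*} [Semiring R] (m d : ℕ) (b c : Fin m) :
    (jordanShift R m ^ d) b c = if (c : ℕ) = b + d then 1 else 0 := by
  induction d generalizing c with
  | zero => simp [one_apply, Fin.ext_iff, eq_comm]
  | succ d ih =>
    rw [pow_succ, mul_apply]
    simp only [ih]
    simp only [jordanShift, of_apply, mul_ite, mul_one, mul_zero]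
    by_cases h : (b : ℕ) + d < m
    · rw [Fintype.sum_eq_single ⟨b + d, h⟩ fun x hx => by simp_all [Fin.ext_iff]]
      simp only [if_true, add_assoc]
    · rw [Fintype.sum_eq_zero _ fun x => by split_ifs <;> first | rfl | omega, if_neg (by omega)]

def blockEquiv (m : ℕ) : Fin m × Fin 2 ≃ Fin (2 * m) :=
  finProdFinEquiv.trans (finCongr (Nat.mul_comm m 2))

@[simp] theorem blockEquiv_apply_val (m : ℕ) (x : Fin m × Fin 2) :
    (blockEquiv m x : ℕ) = 2 * x.1 + x.2 := by
  simp [blockEquiv]; ring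

theorem jordanOsc_submatrix_blockEquiv (m : ℕ) (θ : ℝ) :
    (jordanOsc m θ).submatrix (blockEquiv m) (blockEquiv m) =
      jordanShift ℝ m ⊗ₖ 1 + 1 ⊗ₖ rotationMatrix θ := by
  ext ⟨b, r⟩ ⟨c, s⟩
  simp only [submatrix_apply, jordanOsc, of_apply, blockEquiv_apply_val, Matrix.add_apply,
    kronecker_apply, one_apply, jordanShift, rotationMatrix, Fin.ext_iff]
  fin_cases r <;> fin_cases s <;> simp <;> split_ifs <;> first | ring1 | (exfalso; omega)

theorem jordanOsc_pow_blockEquiv_apply (m k d : ℕ) (θ : ℝ) {b c : Fin m}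
    (hbc : (c : ℕ) = b + d) (r s : Fin 2) :
    (jordanOsc m θ ^ k) (blockEquiv m (b, r)) (blockEquiv m (c, s)) =
      k.choose d * rotationMatrix (((k - d : ℕ) : ℝ) * θ) r s := by
  have hcomm : Commute (jordanShift ℝ m ⊗ₖ (1 : Matrix (Fin 2) (Fin 2) ℝ))
      (1 ⊗ₖ rotationMatrix θ) := by
    simp only [Commute, SemiconjBy, ← mul_kronecker_mul, one_mul, mul_one]
  rw [← submatrix_apply (jordanOsc m θ ^ k) (blockEquiv m) (blockEquiv m), submatrix_pow_equiv,
    jordanOsc_submatrix_blockEquiv, hcomm.add_pow', Matrix.sum_apply]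
  simp only [Matrix.smul_apply, kronecker_pow, ← mul_kronecker_mul, kroneckerMap_apply,
    jordanShift_pow_apply, one_pow, one_mul, mul_one, rotationMatrix_pow, ite_mul, zero_mul, hbc,
    Nat.add_left_cancel_iff]
  rw [Finset.sum_eq_single (d, k - d)]
  · simp [nsmul_eq_mul]
  · rintro ⟨a, a'⟩ ha hne
    rw [Finset.HasAntidiagonal.mem_antidiagonal] at ha
    rw [if_neg (by rintro rfl; exact hne (by simp; omega)), smul_zero]
  · -- `d > k`: the truncated `k - d` is harmless since `k.choose d = 0`
    intro hd
    rw [Finset.HasAntidiagonal.mem_antidiagonal] at hd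
    rw [Nat.choose_eq_zero_of_lt (by omega), zero_smul]

theorem jordanOsc_pow_succ_blockEquiv_apply (m n : ℕ) (θ : ℝ) {b c : Fin m}
    (hbc : (c : ℕ) = b + 1) (k : Fin (2 * m)) :
    (jordanOsc m θ ^ (n + 1)) (blockEquiv m (b, 0)) k =
      cos θ * (jordanOsc m θ ^ n) (blockEquiv m (b, 0)) k
        + sin θ * (jordanOsc m θ ^ n) (blockEquiv m (b, 1)) k
        + (jordanOsc m θ ^ n) (blockEquiv m (c, 0)) k := by
  have hrow (l : Fin (2 * m)) : jordanOsc m θ (blockEquiv m (b, 0)) l =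
      (if l = blockEquiv m (b, 0) then cos θ else 0)
        + (if l = blockEquiv m (b, 1) then sin θ else 0)
        + (if l = blockEquiv m (c, 0) then 1 else 0) := by
    simp only [jordanOsc, of_apply, Fin.ext_iff, blockEquiv_apply_val, Fin.val_zero, Fin.val_one]
    split_ifs <;> first | ring1 | (exfalso; omega)
  simp only [pow_succ', mul_apply, hrow, add_mul, ite_mul, zero_mul, Finset.sum_add_distrib,
    Finset.sum_ite_eq', Finset.mem_univ, if_true, one_mul]

end

theorem v_entries (m : ℕ) (hm : 2 ≤ m) (θ : ℝ) :
    let v : Fin (2 * m) → ℝ := fun k =>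
      Real.cos θ * (jordanOsc m θ ^ (2 * m - 1)) ⟨0, by omega⟩ k
        + Real.sin θ * (jordanOsc m θ ^ (2 * m - 1)) ⟨1, by omega⟩ k
        + (jordanOsc m θ ^ (2 * m - 1)) ⟨2, by omega⟩ k
    ∀ (j : ℕ) (hj1 : 1 ≤ j) (hj2 : j ≤ m),
      v ⟨2 * j - 2, by omega⟩ =
        ((2 * m).choose (j - 1) : ℝ) * Real.cos ((2 * (m : ℝ) - j + 1) * θ) ∧
      v ⟨2 * j - 1, by omega⟩ =
        ((2 * m).choose (j - 1) : ℝ) * Real.sin ((2 * (m : ℝ) - j + 1) * θ) := by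
  intro v j hj1 hj2
  have hv (k : Fin (2 * m)) :
      v k = (jordanOsc m θ ^ (2 * m)) (blockEquiv m (⟨0, by omega⟩, 0)) k := by
    -- `blockEquiv m (⟨b, _⟩, r)` reduces to `⟨2 * b + r, _⟩` definitionally
    have h := jordanOsc_pow_succ_blockEquiv_apply m (2 * m - 1) θ
      (c := ⟨1, by omega⟩) (b := ⟨0, by omega⟩) rfl k
    rw [Nat.sub_add_cancel (by omega)] at h
    exact h.symm
  have hangle : ((2 * m - (j - 1) : ℕ) : ℝ) * θ = (2 * (m : ℝ) - j + 1) * θ := by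
    rw [Nat.cast_sub (by omega), Nat.cast_sub hj1]; push_cast; ring
  have hentry (r : Fin 2) (k : Fin (2 * m)) (hk : (k : ℕ) = 2 * (j - 1) + r) :
      v k = (2 * m).choose (j - 1) * rotationMatrix ((2 * (m : ℝ) - j + 1) * θ) 0 r := by
    have hcol : k = blockEquiv m (⟨j - 1, by omega⟩, r) := Fin.ext (by simp [hk])
    rw [hv, hcol, jordanOsc_pow_blockEquiv_apply m (2 * m) (j - 1) θ (by simp), hangle]
  exact ⟨by simpa [rotationMatrix] using hentry 0 _ (by simp; omega),
    by simpa [rotationMatrix] using hentry 1 _ (by simp; omega)⟩
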